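/- For every graph G and k ∈ ℕ, if G has a lenient tree decomposition of width at most k then G has no strict bramble of order greater than k. -/

import Mathlib

open SimpleGraph

section Defs

variable {V W : Type}

/-- `X` covers the family `B`: every member of `B` meets `X`. -/
def Covers (X : Set V) (B : Set (Set V)) : Prop := ∀ S ∈ B, (S ∩ X).Nonempty

/-- A strict bramble: a family of connected vertex sets, pairwise intersecting. -/
def IsStrictBramble (G : SimpleGraph V) (B : Set (Set V)) : Prop :=
  (∀ S ∈ B, (G.induce S).Connected) ∧ ∀ S ∈ B, ∀ S' ∈ B, (S ∩ S').Nonempty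

/-- Two vertex sets touch: they intersect or are joined by an edge. -/
def Touches (G : SimpleGraph V) (S S' : Set V) : Prop :=
  (S ∩ S').Nonempty ∨ ∃ u ∈ S, ∃ v ∈ S', G.Adj u v

/-- A bramble: a family of connected vertex sets, pairwise touching. -/
def IsBramble (G : SimpleGraph V) (B : Set (Set V)) : Prop :=
  (∀ S ∈ B, (G.induce S).Connected) ∧ ∀ S ∈ B, ∀ S' ∈ B, Touches G S S'

/-- The order of a family of vertex sets: minimum size of a covering set. -/
noncomputable def brOrder (B : Set (Set V)) : ℕ :=
  sInf {n | ∃ X : Set V, Covers X B ∧ X.ncard = n}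

/-- The strict bramble number. -/
noncomputable def sbn (G : SimpleGraph V) : ℕ :=
  sSup {n | ∃ B, IsStrictBramble G B ∧ brOrder B = n}

/-- The bramble number. -/
noncomputable def bn (G : SimpleGraph V) : ℕ :=
  sSup {n | ∃ B, IsBramble G B ∧ brOrder B = n}

/-- `S` is an `(x,y)`-separator: `x, y ∉ S` and `x, y` lie in different
components of `G − S`. -/
def SepPair (G : SimpleGraph V) (x y : V) (S : Set V) : Prop :=
  x ∉ S ∧ y ∉ S ∧ ∀ (hx : x ∈ Sᶜ) (hy : y ∈ Sᶜ),
    ¬ (G.induce Sᶜ).Reachable ⟨x, hx⟩ ⟨y, hy⟩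

/-- `S` is an `(X,Y)`-separator of `G`. -/
def IsSetSeparator (G : SimpleGraph V) (X Y S : Set V) : Prop :=
  ∀ x ∈ X \ S, ∀ y ∈ Y \ S, SepPair G x y S

/-- A lenient tree decomposition of `G`. -/
structure LenientTD (G : SimpleGraph V) where
  ι : Type
  T : SimpleGraph ι
  tree : T.IsTree
  χ : ι → Set V
  covers : ∀ v : V, ∃ t, v ∈ χ t
  edge_mem : ∀ u v : V, G.Adj u v →
    ∃ t t', (t = t' ∨ T.Adj t t') ∧ u ∈ χ t ∪ χ t' ∧ v ∈ χ t ∪ χ t'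
  trace_conn : ∀ v : V, (T.induce {t | v ∈ χ t}).Connected

/-- The width of a lenient tree decomposition is at most `k`. -/
def LenientTD.WidthLE {G : SimpleGraph V} (D : LenientTD G) (k : ℕ) : Prop :=
  ∀ t, (D.χ t).ncard ≤ k

/-- An ordinary tree decomposition of `G`. -/
structure TreeDecomp (G : SimpleGraph V) where
  ι : Type
  T : SimpleGraph ι
  tree : T.IsTree
  χ : ι → Set V
  covers : ∀ v : V, ∃ t, v ∈ χ t
  edge_mem : ∀ u v : V, G.Adj u v → ∃ t, u ∈ χ t ∧ v ∈ χ t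
  trace_conn : ∀ v : V, (T.induce {t | v ∈ χ t}).Connected

/-- Treewidth: minimum over tree decompositions of (max bag size − 1). -/
noncomputable def tw (G : SimpleGraph V) : ℕ :=
  sInf {k | ∃ D : TreeDecomp G, ∀ t, (D.χ t).ncard ≤ k + 1}

/-- A minor model of `H` in `G`. -/
def IsMinorModel (H : SimpleGraph W) (G : SimpleGraph V) (μ : W → Set V) : Prop :=
  (∀ w, (G.induce (μ w)).Connected) ∧
  (∀ w w', w ≠ w' → μ w ∩ μ w' = ∅) ∧
  (∀ w w', H.Adj w w' → ∃ u ∈ μ w, ∃ v ∈ μ w', G.Adj u v)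

/-- `H` is a minor of `G`. -/
def IsMinorOf (H : SimpleGraph W) (G : SimpleGraph V) : Prop :=
  ∃ μ : W → Set V, IsMinorModel H G μ

/-- The lexicographic product `T · K_k`. -/
def lexK {ι : Type} (T : SimpleGraph ι) (k : ℕ) : SimpleGraph (ι × Fin k) where
  Adj a b := T.Adj a.1 b.1 ∨ (a.1 = b.1 ∧ a.2 ≠ b.2)
  symm := ⟨by
    rintro a b (h | ⟨h1, h2⟩)
    · exact Or.inl h.symm
    · exact Or.inr ⟨h1.symm, h2.symm⟩⟩
  loopless := ⟨by
    rintro a (h | ⟨_, h2⟩)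
    · exact T.loopless.irrefl _ h
    · exact h2 rfl⟩

/-- The lexicographic tree product number. -/
noncomputable def ltp (G : SimpleGraph V) : ℕ :=
  sInf {m | ∃ (ι : Type) (T : SimpleGraph ι), T.IsTree ∧ IsMinorOf G (lexK T m)}

/-- The `(T,χ)`-completion of `G`: make each union of two close bags a clique. -/
def LenientTD.completion {G : SimpleGraph V} (D : LenientTD G) : SimpleGraph V where
  Adj u v := u ≠ v ∧ ∃ t t', (t = t' ∨ D.T.Adj t t') ∧
    u ∈ D.χ t ∪ D.χ t' ∧ v ∈ D.χ t ∪ D.χ t'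
  symm := ⟨by
    rintro u v ⟨hne, t, t', hc, hu, hv⟩
    exact ⟨hne.symm, t, t', hc, hv, hu⟩⟩
  loopless := ⟨fun u h => h.1 rfl⟩

/-- `G` is chordal: every cycle of length at least four has a chord. -/
def IsChordal (G : SimpleGraph V) : Prop :=
  ∀ (v : V) (w : G.Walk v v), w.IsCycle → 4 ≤ w.length →
    ∃ x ∈ w.support, ∃ y ∈ w.support, G.Adj x y ∧ s(x, y) ∉ w.edges

end Defs

/-
For a connected set `S` of vertices, the nodes whose bags meet `S` form a subtree of `T`: each
vertex contributes its (connected) trace, and an edge of `G[S]` joins two traces at close nodes.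
Members of a strict bramble intersect, so these subtrees pairwise intersect, and by the Helly
property of subtrees of a tree they share a node `t`. The bag `χ t` then covers the bramble.
-/

namespace SimpleGraph

variable {ι : Type*} {T : SimpleGraph ι}

def IsPathConvex (T : SimpleGraph ι) (X : Set ι) : Prop :=
  ∀ ⦃x y : ι⦄, x ∈ X → y ∈ X → ∀ p : T.Walk x y, p.IsPath → ∀ z ∈ p.support, z ∈ X

theorem IsPathConvex.inter {X Y : Set ι} (hX : T.IsPathConvex X) (hY : T.IsPathConvex Y) :
    T.IsPathConvex (X ∩ Y) := fun _ _ hx hy p hp z hz =>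
  ⟨hX hx.1 hy.1 p hp z hz, hY hx.2 hy.2 p hp z hz⟩

theorem IsAcyclic.isPathConvex_of_preconnected (hT : T.IsAcyclic) {X : Set ι}
    (hX : (T.induce X).Preconnected) : T.IsPathConvex X := by
  classical
  intro x y hx hy p hp z hz
  obtain ⟨q⟩ := hX ⟨x, hx⟩ ⟨y, hy⟩
  have hpq : p = (q.map (Embedding.induce X).toHom).bypass := congrArg Subtype.val <|
    (hT.subsingleton_path x y).elim ⟨p, hp⟩ ⟨_, Walk.bypass_isPath _⟩
  rw [hpq] at hz
  obtain ⟨z', -, rfl⟩ := List.mem_map.1 <|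
    Walk.support_map _ _ ▸ Walk.support_bypass_subset_support _ hz
  exact z'.2

/-- The path from `u` to `c` either passes through `v` or can be prolonged by `v`. -/
theorem IsPathConvex.mem_or_mem_of_adj (hT : T.Preconnected) {R Q : Set ι}
    (hR : T.IsPathConvex R) (hQ : T.IsPathConvex Q) {c u v : ι} (hcR : c ∈ R) (hcQ : c ∈ Q)
    (hu : u ∈ R) (hv : v ∈ Q) (huv : T.Adj u v) : u ∈ Q ∨ v ∈ R := by
  classical
  obtain ⟨p, hp⟩ := (hT u c).some.toPath
  by_cases hvp : v ∈ p.support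
  · exact Or.inr (hR hu hcR p hp v hvp)
  · exact Or.inl (hQ hv hcQ (.cons huv.symm p) (hp.cons hvp) u (by simp))

theorem IsPathConvex.exists_mem_support_inter (hT : T.Preconnected) {R Q : Set ι}
    (hR : T.IsPathConvex R) (hQ : T.IsPathConvex Q) {c : ι} (hcR : c ∈ R) (hcQ : c ∈ Q)
    {a b : ι} (p : T.Walk a b) (hp : ∀ z ∈ p.support, z ∈ R ∪ Q) (ha : a ∈ R) (hb : b ∈ Q) :
    ∃ m ∈ p.support, m ∈ R ∧ m ∈ Q := by
  by_cases hbR : b ∈ R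
  · exact ⟨b, p.end_mem_support, hbR, hb⟩
  obtain ⟨d, hd, hdR, hdR'⟩ := p.exists_boundary_dart R ha hbR
  have hdQ : d.snd ∈ Q := (hp _ (p.dart_snd_mem_support_of_mem_darts hd)).resolve_left hdR'
  have hdQ' : d.fst ∈ Q :=
    (hR.mem_or_mem_of_adj hT hQ hcR hcQ hdR hdQ d.adj).resolve_right hdR'
  exact ⟨d.fst, p.dart_fst_mem_support_of_mem_darts hd, hdR, hdQ'⟩

/-- The path from `a` to `b` lies in `B` and, being the bypass of a walk through `c`, in `A ∪ C`;
it crosses from `A` into `C` inside `A ∩ C`. -/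
theorem IsPathConvex.inter_inter_nonempty (hT : T.Preconnected) {A B C : Set ι}
    (hA : T.IsPathConvex A) (hB : T.IsPathConvex B) (hC : T.IsPathConvex C)
    (hAB : (A ∩ B).Nonempty) (hBC : (B ∩ C).Nonempty) (hAC : (A ∩ C).Nonempty) :
    (A ∩ B ∩ C).Nonempty := by
  classical
  obtain ⟨a, haA, haB⟩ := hAB
  obtain ⟨b, hbB, hbC⟩ := hBC
  obtain ⟨c, hcA, hcC⟩ := hAC
  obtain ⟨q, hq⟩ := (hT a c).some.toPath
  obtain ⟨r, hr⟩ := (hT c b).some.toPath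
  have hsub : ∀ z ∈ (q.append r).bypass.support, z ∈ A ∪ C := by
    intro z hz
    rcases (Walk.mem_support_append_iff q r).1 (Walk.support_bypass_subset_support _ hz)
      with hz | hz
    · exact .inl (hA haA hcA q hq z hz)
    · exact .inr (hC hcC hbC r hr z hz)
  obtain ⟨m, hm, hmA, hmC⟩ :=
    hA.exists_mem_support_inter hT hC hcA hcC _ hsub haA hbC
  exact ⟨m, ⟨hmA, hB haB hbB _ (Walk.bypass_isPath _) m hm⟩, hmC⟩

end SimpleGraph

theorem Finset.exists_forall_mem_of_helly3 {α β : Type*} {P : Set α → Prop}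
    (inter : ∀ A B, P A → P B → P (A ∩ B))
    (helly3 : ∀ A B C, P A → P B → P C → (A ∩ B).Nonempty → (B ∩ C).Nonempty →
      (A ∩ C).Nonempty → (A ∩ B ∩ C).Nonempty)
    {s : Finset β} (hs : s.Nonempty) (F : β → Set α) (hP : ∀ i ∈ s, P (F i))
    (hF : ∀ i ∈ s, ∀ j ∈ s, (F i ∩ F j).Nonempty) : ∃ m, ∀ i ∈ s, m ∈ F i := by
  induction hs using Finset.Nonempty.cons_induction generalizing F with
  | singleton i =>
    obtain ⟨m, hm, -⟩ := hF i (mem_singleton_self i) i (mem_singleton_self i)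
    exact ⟨m, by simpa using hm⟩
  | cons i s _ hs ih =>
    have hFi : ∀ j ∈ s, (F i ∩ F j).Nonempty := fun j hj =>
      hF i (mem_cons_self i s) j (mem_cons_of_mem hj)
    have hPs : ∀ j ∈ s, P (F j) := fun j hj => hP j (mem_cons_of_mem hj)
    obtain ⟨m, hm⟩ := ih (fun j => F i ∩ F j)
      (fun j hj => inter _ _ (hP i (mem_cons_self i s)) (hPs j hj))
      fun j hj k hk =>
        (helly3 _ _ _ (hP i (mem_cons_self i s)) (hPs j hj) (hPs k hk) (hFi j hj)
          (hF j (mem_cons_of_mem hj) k (mem_cons_of_mem hk)) (hFi k hk)).mono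
          (by rintro x ⟨⟨hxi, hxj⟩, hxk⟩; exact ⟨⟨hxi, hxj⟩, hxi, hxk⟩)
    obtain ⟨j, hj⟩ := hs
    refine ⟨m, ?_⟩
    simp only [mem_cons, forall_eq_or_imp]
    exact ⟨(hm j hj).1, fun k hk => (hm k hk).2⟩

theorem brOrder_le_ncard {V : Type} {X : Set V} {B : Set (Set V)} (h : Covers X B) :
    brOrder B ≤ X.ncard :=
  Nat.sInf_le ⟨X, h, rfl⟩

namespace LenientTD

variable {V : Type} {G : SimpleGraph V} (D : LenientTD G)

abbrev nodesMeeting (S : Set V) : Set D.ι := {t | (S ∩ D.χ t).Nonempty}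

theorem exists_close_of_adj {u v : V} (h : G.Adj u v) :
    ∃ a b, u ∈ D.χ a ∧ v ∈ D.χ b ∧ (a = b ∨ D.T.Adj a b) := by
  obtain ⟨t, t', htt', hu, hv⟩ := D.edge_mem u v h
  rcases hu with hu | hu <;> rcases hv with hv | hv
  · exact ⟨t, t, hu, hv, .inl rfl⟩
  · exact ⟨t, t', hu, hv, htt'⟩
  · exact ⟨t', t, hu, hv, htt'.imp Eq.symm Adj.symm⟩
  · exact ⟨t', t', hu, hv, .inl rfl⟩

theorem reachable_induce_nodesMeeting_of_mem {S : Set V} {v : V} (hv : v ∈ S)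
    {t t' : D.ι} (ht : v ∈ D.χ t) (ht' : v ∈ D.χ t') :
    (D.T.induce (D.nodesMeeting S)).Reachable ⟨t, v, hv, ht⟩ ⟨t', v, hv, ht'⟩ :=
  ((D.trace_conn v).preconnected ⟨t, ht⟩ ⟨t', ht'⟩).map
    (induceHomOfLE D.T fun s hs => show (S ∩ D.χ s).Nonempty from ⟨v, hv, hs⟩).toHom

theorem reachable_induce_nodesMeeting {S : Set V} {u v : S}
    (p : (G.induce S).Walk u v) {t t' : D.ι} (ht : u.1 ∈ D.χ t) (ht' : v.1 ∈ D.χ t') :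
    (D.T.induce (D.nodesMeeting S)).Reachable ⟨t, u.1, u.2, ht⟩ ⟨t', v.1, v.2, ht'⟩ := by
  induction p generalizing t with
  | @nil u => exact D.reachable_induce_nodesMeeting_of_mem u.2 ht ht'
  | @cons u w v huw p ih =>
    obtain ⟨a, b, ha, hb, hab⟩ := D.exists_close_of_adj huw
    have hab' :
        (D.T.induce (D.nodesMeeting S)).Reachable ⟨a, u.1, u.2, ha⟩ ⟨b, w.1, w.2, hb⟩ := by
      rcases hab with rfl | hab
      · rfl
      · exact Adj.reachable hab
    exact (D.reachable_induce_nodesMeeting_of_mem u.2 ht ha).trans (hab'.trans (ih hb ht'))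

theorem preconnected_induce_nodesMeeting {S : Set V}
    (hS : (G.induce S).Preconnected) : (D.T.induce (D.nodesMeeting S)).Preconnected := by
  rintro ⟨t, u, hu, htu⟩ ⟨t', v, hv, htv⟩
  obtain ⟨p⟩ := hS ⟨u, hu⟩ ⟨v, hv⟩
  exact D.reachable_induce_nodesMeeting p htu htv

theorem exists_bag_covers [Finite V] {B : Set (Set V)} (hB : IsStrictBramble G B) :
    ∃ t, Covers (D.χ t) B := by
  obtain ⟨hconn, hinter⟩ := hB
  have : Nonempty D.ι := D.tree.connected.nonempty
  obtain hB0 | hB0 := B.toFinite.toFinset.eq_empty_or_nonempty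
  · exact ⟨Classical.arbitrary _, fun S hS => by simp_all⟩
  obtain ⟨t, ht⟩ := Finset.exists_forall_mem_of_helly3
    (fun _ _ hX hY => hX.inter hY)
    (fun _ _ _ hA hB hC => hA.inter_inter_nonempty D.tree.connected.preconnected hB hC)
    hB0 D.nodesMeeting
    (fun S hS => D.tree.isAcyclic.isPathConvex_of_preconnected
      (D.preconnected_induce_nodesMeeting (hconn S (by simpa using hS)).preconnected))
    fun S hS S' hS' => by
      obtain ⟨v, hvS, hvS'⟩ := hinter S (by simpa using hS) S' (by simpa using hS')
      obtain ⟨t, ht⟩ := D.covers v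
      exact ⟨t, ⟨v, hvS, ht⟩, v, hvS', ht⟩
  exact ⟨t, fun S hS => ht S (by simpa using hS)⟩

end LenientTD

/-- a lenient tree decomposition of width at most `k` forces every
strict bramble to have order at most `k`. -/
theorem strictBramble_order_le_of_lenientTD {V : Type} [Fintype V]
    (G : SimpleGraph V) (k : ℕ) (h : ∃ D : LenientTD G, D.WidthLE k) :
    ∀ B : Set (Set V), IsStrictBramble G B → brOrder B ≤ k := by
  intro B hB
  obtain ⟨D, hD⟩ := h
  obtain ⟨t, ht⟩ := D.exists_bag_covers hB
  exact (brOrder_le_ncard ht).trans (hD t)
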